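/- arXiv:2407.07474 — 5 statements merged into one kernel-verified Lean document; each statement's English description precedes it below -/
import Mathlib

section
/- Let S be a finite set of searchers and V a validator, with coalitional value v(C)=0 if V∉C and v(A∪{V}) = v̄(A), where v̄ : 2^S → ℝ≥0 is monotone and submodular with v̄(∅)=0. An allocation x (with x ≥ 0 and Σ x = v̄(S)) is in the core if and only if 0 ≤ x_i ≤ v̄(S) − v̄(S\{i}) for each i ∈ S and x_V = v̄(S) − Σ_{i∈S} x_i. -/
lemma marginal_sum_le
    {S : Type*} [Fintype S] [DecidableEq S]
    (vbar : Finset S → ℝ)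
    (hsub : ∀ A B : Finset S, vbar (A ∪ B) + vbar (A ∩ B) ≤ vbar A + vbar B)
    (D : Finset S) :
    ∑ i ∈ D, (vbar Finset.univ - vbar (Finset.univ.erase i))
      ≤ vbar Finset.univ - vbar Dᶜ := by
  induction D using Finset.induction with
  | empty => simp
  | @insert a D ha ih =>
    rw [Finset.sum_insert ha]
    have hcomp : (insert a D)ᶜ = Dᶜ.erase a := by
      ext x; simp [Finset.mem_erase, and_comm]
    rw [hcomp]
    have hsub' := hsub (Finset.univ.erase a) Dᶜ
    have hu : Finset.univ.erase a ∪ Dᶜ = Finset.univ := by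
      apply Finset.eq_univ_of_forall
      intro x
      by_cases hx : x = a
      · subst hx; simp [ha]
      · simp [hx]
    have hi : Finset.univ.erase a ∩ Dᶜ = Dᶜ.erase a := by
      ext x; simp [Finset.mem_erase, and_comm]
    rw [hu, hi] at hsub'
    linarith

/-- Core characterization: for a monotone submodular `v̄` with veto validator (`none`),
an allocation `x ≥ 0` with `∑ x = v̄ S` is in the core iff each searcher receives at most
their marginal contribution and the validator receives the residual. -/
theorem core_characterization
    {S : Type*} [Fintype S] [DecidableEq S]
    (vbar : Finset S → ℝ)
    (hmono : ∀ A B : Finset S, A ⊆ B → vbar A ≤ vbar B)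
    (hsub : ∀ A B : Finset S, vbar (A ∪ B) + vbar (A ∩ B) ≤ vbar A + vbar B)
    (h0 : vbar ∅ = 0)
    (v : Finset (Option S) → ℝ)
    (hv : ∀ C : Finset (Option S), v C = if none ∈ C then vbar C.eraseNone else 0)
    (x : Option S → ℝ)
    (hx0 : ∀ j, 0 ≤ x j)
    (heff : ∑ j, x j = vbar Finset.univ) :
    (∀ C : Finset (Option S), v C ≤ ∑ j ∈ C, x j) ↔
      ((∀ i : S, 0 ≤ x (some i) ∧
          x (some i) ≤ vbar Finset.univ - vbar (Finset.univ.erase i)) ∧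
        x none = vbar Finset.univ - ∑ i : S, x (some i)) := by
  have hsplit : x none + ∑ i : S, x (some i) = vbar Finset.univ := by
    rw [← heff, Fintype.sum_option]
  constructor
  · intro hcore
    refine ⟨fun i => ⟨hx0 _, ?_⟩, by linarith⟩
    set C : Finset (Option S) :=
      insert none ((Finset.univ.erase i).map Function.Embedding.some) with hC
    have hnone : none ∈ C := Finset.mem_insert_self _ _
    have hnotmem : (none : Option S) ∉ (Finset.univ.erase i).map Function.Embedding.some := by
      simp
    have h1 := hcore C
    rw [hv C, if_pos hnone] at h1
    have hEN : C.eraseNone = Finset.univ.erase i := by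
      rw [hC]
      ext y
      simp [Finset.mem_eraseNone]
    rw [hEN, hC, Finset.sum_insert hnotmem, Finset.sum_map] at h1
    have h2 : ∑ j ∈ Finset.univ.erase i, x (some j)
        = (∑ j : S, x (some j)) - x (some i) := by
      rw [Finset.sum_erase_eq_sub (Finset.mem_univ i)]
    simp only [Function.Embedding.some_apply] at h1
    rw [h2] at h1
    linarith
  · rintro ⟨hbound, hres⟩ C
    rw [hv C]
    by_cases hn : none ∈ C
    · rw [if_pos hn]
      have hsum : ∑ j ∈ C, x j = x none + ∑ i ∈ C.eraseNone, x (some i) := by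
        rw [← Finset.add_sum_erase _ _ hn, ← Finset.map_some_eraseNone, Finset.sum_map]
        simp
      rw [hsum]
      set A := C.eraseNone
      have hAc : ∑ i ∈ Aᶜ, x (some i) ≤ vbar Finset.univ - vbar A := by
        calc ∑ i ∈ Aᶜ, x (some i)
            ≤ ∑ i ∈ Aᶜ, (vbar Finset.univ - vbar (Finset.univ.erase i)) :=
              Finset.sum_le_sum fun i _ => (hbound i).2
          _ ≤ vbar Finset.univ - vbar Aᶜᶜ := marginal_sum_le vbar hsub Aᶜ
          _ = vbar Finset.univ - vbar A := by rw [compl_compl]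
      have hpart : ∑ i ∈ A, x (some i) + ∑ i ∈ Aᶜ, x (some i) = ∑ i : S, x (some i) :=
        Finset.sum_add_sum_compl A _
      linarith
    · rw [if_neg hn]
      exact Finset.sum_nonneg fun j _ => hx0 j
end

section
/- Let v̄(A) = Σ_{i∈𝒜} max_{j∈A} v_{ij} with v_{ij} ≥ 0. For each opportunity i let M_i be the second-highest value among (v_{ij})_{j∈S}, i.e. the second order statistic, namely the maximum of v_{ij} over j ∈ S with one maximizer of v_{i·} removed (and M_i = 0 if there are fewer than two entries), and let M = Σ_i M_i. Then the allocation giving the validator x_V = M and each searcher j the amount x_j = Σ_{i : j is a maximizer of v_{i·}} (v_{ij} − M_i), summing over opportunities where j attains the maximum, with ties broken so that each opportunity is counted once, is in the core. -/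
open Finset

lemma inf'_erase_sup_eq {S : Type*} [Fintype S] [DecidableEq S] [Nonempty S]
    (wi : S → NNReal) (s : S) (hs : ∀ j, wi j ≤ wi s) :
    Finset.univ.inf' Finset.univ_nonempty (fun j : S => (Finset.univ.erase j).sup wi)
      = (Finset.univ.erase s).sup wi := by
  apply le_antisymm
  · exact Finset.inf'_le _ (Finset.mem_univ s)
  · apply Finset.le_inf'
    intro j _
    apply Finset.sup_le
    intro k hk
    rcases eq_or_ne k j with rfl | hkj
    · calc wi k ≤ wi s := hs k
        _ ≤ _ := Finset.le_sup (Finset.mem_erase.mpr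
            ⟨(Finset.mem_erase.mp hk).1.symm, Finset.mem_univ s⟩)
    · exact Finset.le_sup (Finset.mem_erase.mpr ⟨hkj, Finset.mem_univ k⟩)

/-- In the additive-opportunity game, the allocation giving the validator the sum `M` of
second-highest values and each winning searcher the margin `v_{ij} − M_i` on the
opportunities it wins (ties broken by a fixed selection `σ` of maximizers) is in the core. -/
theorem second_price_allocation_in_core
    {S A : Type*} [Fintype S] [Fintype A] [DecidableEq S] [DecidableEq A] [Nonempty S]
    (w : A → S → NNReal)
    (vbar : Finset S → ℝ)
    (hvbar : ∀ T : Finset S, vbar T = ∑ i : A, ((T.sup (w i) : NNReal) : ℝ))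
    (M : A → ℝ)
    (hM : ∀ i : A, M i =
      ((Finset.univ.inf' Finset.univ_nonempty
        (fun j : S => (Finset.univ.erase j).sup (w i)) : NNReal) : ℝ))
    (σ : A → S) (hσ : ∀ i j, w i j ≤ w i (σ i))
    (v : Finset (Option S) → ℝ)
    (hv : ∀ C : Finset (Option S), v C = if none ∈ C then vbar C.eraseNone else 0)
    (x : Option S → ℝ)
    (hxV : x none = ∑ i : A, M i)
    (hxS : ∀ j : S, x (some j) =
      ∑ i ∈ Finset.univ.filter (fun i : A => σ i = j), ((w i (σ i) : ℝ) - M i)) :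
    (∀ j, 0 ≤ x j) ∧ (∑ j, x j = v Finset.univ) ∧
      (∀ C : Finset (Option S), v C ≤ ∑ j ∈ C, x j) := by
  have hMi : ∀ i : A, M i = (((Finset.univ.erase (σ i)).sup (w i) : NNReal) : ℝ) := by
    intro i; rw [hM i, inf'_erase_sup_eq (w i) (σ i) (hσ i)]
  have hMle : ∀ i : A, M i ≤ ((w i (σ i) : NNReal) : ℝ) := by
    intro i
    rw [hMi i]
    exact_mod_cast Finset.sup_le fun k _ => hσ i k
  have hM0 : ∀ i : A, 0 ≤ M i := fun i => (hMi i) ▸ ((univ.erase (σ i)).sup (w i)).2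
  have hx0 : ∀ j, 0 ≤ x j := by
    intro j
    cases j with
    | none => rw [hxV]; exact Finset.sum_nonneg fun i _ => hM0 i
    | some j =>
        rw [hxS]
        exact Finset.sum_nonneg fun i _ => sub_nonneg.mpr (hMle i)
  have hsupuniv : ∀ i : A, (Finset.univ.sup (w i)) = w i (σ i) :=
    fun i => le_antisymm (Finset.sup_le fun k _ => hσ i k) (Finset.le_sup (mem_univ _))
  -- key: sum over a coalition of searchers
  have hsum : ∀ T : Finset S,
      ∑ j ∈ T, x (some j)
        = ∑ i ∈ univ.filter (fun i : A => σ i ∈ T), ((w i (σ i) : ℝ) - M i) := by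
    intro T
    rw [← Finset.sum_fiberwise_of_maps_to (g := σ)
      (fun i hi => (Finset.mem_filter.mp hi).2) (fun i => ((w i (σ i) : ℝ) - M i))]
    apply Finset.sum_congr rfl
    intro j hj
    rw [hxS j]
    congr 1
    ext i
    simp only [Finset.mem_filter, Finset.mem_univ, true_and]
    constructor
    · rintro rfl; exact ⟨hj, rfl⟩
    · rintro ⟨_, rfl⟩; exact rfl
  have hcoal : ∀ T : Finset S,
      vbar T ≤ (∑ i : A, M i) + ∑ j ∈ T, x (some j) := by
    intro T
    rw [hsum T, hvbar T, ← Finset.sum_filter_add_sum_filter_not univ (fun i : A => σ i ∈ T) M,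
      add_assoc, add_comm (∑ i ∈ univ.filter (fun i : A => ¬ σ i ∈ T), M i), ← add_assoc,
      ← Finset.sum_add_distrib,
      ← Finset.sum_filter_add_sum_filter_not univ (fun i : A => σ i ∈ T)
        (fun i => ((T.sup (w i) : NNReal) : ℝ))]
    gcongr with i hi i hi
    · -- σ i ∈ T
      have : ((T.sup (w i) : NNReal) : ℝ) ≤ ((w i (σ i) : NNReal) : ℝ) := by
        exact_mod_cast Finset.sup_le fun k _ => hσ i k
      linarith
    · -- σ i ∉ T
      have hTs : T ⊆ univ.erase (σ i) := by
        intro k hk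
        exact Finset.mem_erase.mpr ⟨fun h => (Finset.mem_filter.mp hi).2 (h ▸ hk), mem_univ k⟩
      rw [hMi i]
      exact_mod_cast Finset.sup_mono hTs
  refine ⟨hx0, ?_, ?_⟩
  · rw [Fintype.sum_option, hxV, hsum Finset.univ, hv]
    have : Finset.eraseNone (univ : Finset (Option S)) = univ := by
      ext j; simp [Finset.mem_eraseNone]
    simp only [Finset.mem_univ, if_pos, this, hvbar]
    simp only [Finset.mem_univ, Finset.filter_true]
    rw [← Finset.sum_add_distrib]
    apply Finset.sum_congr rfl
    intro i _
    rw [hsupuniv i]; ring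
  · intro C
    rw [hv C]
    by_cases hC : none ∈ C
    · rw [if_pos hC]
      have hsplit : ∑ j ∈ C, x j = x none + ∑ j ∈ C.eraseNone, x (some j) := by
        rw [← Finset.add_sum_erase _ _ hC, ← Finset.map_some_eraseNone, Finset.sum_map]
        rfl
      rw [hsplit, hxV]
      exact hcoal C.eraseNone
    · rw [if_neg hC]
      exact Finset.sum_nonneg fun j _ => hx0 j
end

section
/- Suppose for each opportunity i ∈ 𝒜, the maximum of (v_{ij})_{j∈S} is attained by at least two distinct searchers (or all v_{ij}=0). Then in every core allocation of the game v̄(A)=Σ_i max_{j∈A} v_{ij}, every searcher receives 0 and the validator receives v̄(S). -/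
/-!
A searcher's core payoff is at least its stand-alone value, which is 0 because nothing is built
without the validator, and at most its marginal contribution `v̄(S) - v̄(S \ {j})`. When every
opportunity has two highest bidders (or is worthless), removing one searcher leaves every
maximum unchanged, so all marginal contributions vanish and the validator keeps everything.
-/

open Finset

section Core

variable {N : Type*} [Fintype N] {v : Finset N → ℝ} {x : N → ℝ}

def IsCoreAllocation (v : Finset N → ℝ) (x : N → ℝ) : Prop :=
  ∑ p, x p = v univ ∧ ∀ C : Finset N, v C ≤ ∑ p ∈ C, x p

theorem IsCoreAllocation.singleton_le (h : IsCoreAllocation v x) (p : N) : v {p} ≤ x p := by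
  simpa using h.2 {p}

theorem IsCoreAllocation.le_marginal [DecidableEq N] (h : IsCoreAllocation v x) (p : N) :
    x p ≤ v univ - v (univ.erase p) := by
  have hrest := h.2 (univ.erase p)
  have hsplit := sum_erase_add univ x (mem_univ p)
  linarith [h.1]

end Core

theorem Finset.sup_erase_eq_of_ne {α β : Type*} [DecidableEq α] [SemilatticeSup β] [OrderBot β]
    {s : Finset α} {f : α → β} {a j : α} (ha : a ∈ s) (hfa : f a = s.sup f) (haj : a ≠ j) :
    (s.erase j).sup f = s.sup f :=
  le_antisymm (sup_mono (erase_subset j s)) (hfa ▸ le_sup (mem_erase.mpr ⟨haj, ha⟩))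

theorem Finset.sup_univ_erase_eq_of_two_maximizers {α β : Type*} [Fintype α] [DecidableEq α]
    [SemilatticeSup β] [OrderBot β] {f : α → β}
    (hf : (∀ a, f a = ⊥) ∨ ∃ a b, a ≠ b ∧ f a = univ.sup f ∧ f b = univ.sup f) (j : α) :
    (univ.erase j).sup f = univ.sup f := by
  rcases hf with hbot | ⟨a, b, hab, hfa, hfb⟩
  · simp only [(Finset.sup_eq_bot_iff f _).mpr fun a _ => hbot a]
  · rcases ne_or_eq a j with haj | rfl
    · exact sup_erase_eq_of_ne (mem_univ a) hfa haj
    · exact sup_erase_eq_of_ne (mem_univ b) hfb hab.symm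

theorem full_competition_validator_gets_all_general
    {S A : Type*} [Fintype S] [Fintype A] [DecidableEq S]
    (w : A → S → NNReal)
    (htwo : ∀ i : A, (∀ j : S, w i j = 0) ∨
      ∃ j k : S, j ≠ k ∧ w i j = Finset.univ.sup (w i) ∧ w i k = Finset.univ.sup (w i))
    (vbar : Finset S → ℝ)
    (hvbar : ∀ T : Finset S, vbar T = ∑ i : A, ((T.sup (w i) : NNReal) : ℝ))
    (v : Finset (Option S) → ℝ)
    (hv : ∀ C : Finset (Option S), v C = if none ∈ C then vbar C.eraseNone else 0)
    (x : Option S → ℝ)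
    (heff : ∑ j, x j = vbar Finset.univ)
    (hcore : ∀ C : Finset (Option S), v C ≤ ∑ j ∈ C, x j) :
    (∀ j : S, x (some j) = 0) ∧ x none = vbar Finset.univ := by
  have hv_univ : v univ = vbar univ := by
    rw [hv, if_pos (mem_univ _)]
    congr
    ext; simp
  have hx : IsCoreAllocation v x := ⟨heff.trans hv_univ.symm, hcore⟩
  have hnot_pivotal (j : S) : v (univ.erase (some j)) = v univ := by
    have herase : (univ.erase (some j)).eraseNone = univ.erase j := by ext; simp
    rw [hv_univ, hv, if_pos (by simp), herase, hvbar, hvbar]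
    -- `(0 : ℝ≥0)` is `⊥` by definition, so `htwo i` is the hypothesis of the lemma as it stands.
    exact sum_congr rfl fun i _ => by
      rw [sup_univ_erase_eq_of_two_maximizers ((htwo i).imp_left fun h a => h a) j]
  have hsearcher (j : S) : x (some j) = 0 := by
    have hlower := hx.singleton_le (some j)
    have hupper := hx.le_marginal (some j)
    rw [hv, if_neg (by simp)] at hlower
    linarith [hnot_pivotal j]
  refine ⟨hsearcher, ?_⟩
  rw [← heff, Fintype.sum_option]
  simp [hsearcher]

/-- If for every opportunity the maximum value is attained by at least two distinct searchers
(or all values are zero), then in every core allocation each searcher receives 0 and the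
validator receives the full block value. -/
theorem full_competition_validator_gets_all
    {S A : Type*} [Fintype S] [Fintype A] [DecidableEq S] [DecidableEq A]
    (w : A → S → NNReal)
    (htwo : ∀ i : A, (∀ j : S, w i j = 0) ∨
      ∃ j k : S, j ≠ k ∧ w i j = Finset.univ.sup (w i) ∧ w i k = Finset.univ.sup (w i))
    (vbar : Finset S → ℝ)
    (hvbar : ∀ T : Finset S, vbar T = ∑ i : A, ((T.sup (w i) : NNReal) : ℝ))
    (v : Finset (Option S) → ℝ)
    (hv : ∀ C : Finset (Option S), v C = if none ∈ C then vbar C.eraseNone else 0)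
    (x : Option S → ℝ)
    (hx0 : ∀ j, 0 ≤ x j)
    (heff : ∑ j, x j = vbar Finset.univ)
    (hcore : ∀ C : Finset (Option S), v C ≤ ∑ j ∈ C, x j) :
    (∀ j : S, x (some j) = 0) ∧ x none = vbar Finset.univ :=
  full_competition_validator_gets_all_general w htwo vbar hvbar v hv x heff hcore
end

section
/- Let v̄^K(A) = max over subsets A' ⊆ 𝒜 with |A'| ≤ K of Σ_{i∈A'} max_{j∈A} v_{ij}, with v_{ij} ≥ 0. Then v̄^K is monotone and submodular as a function of A ⊆ S. -/
/-!
Write `a i = max_{j ∈ T} w i j` and `b i = max_{j ∈ U} w i j`. Then `T ∪ U` gives the vector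
`a ⊔ b` and `T ∩ U` a vector below `a ⊓ b`, so by monotonicity it suffices to show that the sum
of the `K` largest entries is submodular on vectors. Take optimal index sets `P` for `a ⊔ b` and
`Q` for `a ⊓ b`. Put `P ∩ Q` on both sides, each index of `P \ Q` on the side where it attains
the maximum, and distribute `Q \ P` over the remaining capacity: since `|P| + |Q| ≤ 2K`, this
gives two admissible sets whose `a`- and `b`-sums dominate the two optimal values.
-/

open Finset

theorem Finset.exists_subset_card_le_card_sdiff_le {α : Type*} [DecidableEq α] (s : Finset α)
    {m n : ℕ} (h : s.card ≤ m + n) : ∃ t ⊆ s, t.card ≤ m ∧ (s \ t).card ≤ n := by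
  obtain ⟨t, hts, ht⟩ := s.exists_subset_card_eq (min_le_left s.card m)
  refine ⟨t, hts, ht ▸ min_le_right _ _, ?_⟩
  rw [card_sdiff_of_subset hts, ht]
  omega

section TopSum

variable {ι M : Type*} [LinearOrder M] [AddCommMonoid M]

theorem sum_sup_add_sum_inf_le [IsOrderedAddMonoid M] [DecidableEq ι] (a b : ι → M)
    (P Q : Finset ι) {R : Finset ι} (hR : R ⊆ Q \ P) :
    ∑ i ∈ P, (a ⊔ b) i + ∑ i ∈ Q, (a ⊓ b) i ≤
      ∑ i ∈ P.filter (fun i => i ∈ Q ∨ b i ≤ a i) ∪ R, a i +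
        ∑ i ∈ P.filter (fun i => i ∈ Q ∨ a i < b i) ∪ ((Q \ P) \ R), b i := by
  have sum_eq_sum_ite : ∀ t ⊆ P ∪ Q, ∀ f : ι → M,
      ∑ i ∈ t, f i = ∑ i ∈ P ∪ Q, if i ∈ t then f i else 0 := fun t ht f => by
    rw [sum_ite_mem, inter_eq_right.2 ht]
  rw [sum_eq_sum_ite P subset_union_left, sum_eq_sum_ite Q subset_union_right,
    sum_eq_sum_ite _ (union_subset ((filter_subset _ _).trans subset_union_left)
      (hR.trans (sdiff_subset.trans subset_union_right))),
    sum_eq_sum_ite _ (union_subset ((filter_subset _ _).trans subset_union_left)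
      (sdiff_subset.trans (sdiff_subset.trans subset_union_right))),
    ← sum_add_distrib, ← sum_add_distrib]
  clear sum_eq_sum_ite
  refine sum_le_sum fun i _ => ?_
  have hRi : i ∈ R → i ∈ Q ∧ i ∉ P := fun h => mem_sdiff.1 (hR h)
  by_cases hP : i ∈ P <;> by_cases hQ : i ∈ Q <;> by_cases hRm : i ∈ R <;>
    by_cases hba : b i ≤ a i <;> simp_all [← not_le, le_of_not_ge, add_comm]

variable [Fintype ι] [OrderBot M]

noncomputable def topSum (K : ℕ) (x : ι → M) : M :=
  ((univ : Finset ι).powerset.filter (fun s : Finset ι => s.card ≤ K)).sup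
    (fun s : Finset ι => ∑ i ∈ s, x i)

theorem sum_le_topSum {K : ℕ} (x : ι → M) {s : Finset ι} (hs : s.card ≤ K) :
    ∑ i ∈ s, x i ≤ topSum K x :=
  le_sup (f := fun s : Finset ι => ∑ i ∈ s, x i) (by simpa using hs)

theorem exists_card_le_sum_eq_topSum (K : ℕ) (x : ι → M) :
    ∃ s : Finset ι, s.card ≤ K ∧ ∑ i ∈ s, x i = topSum K x := by
  obtain ⟨s, hs, hsum⟩ := exists_mem_eq_sup
    ((univ : Finset ι).powerset.filter (fun s : Finset ι => s.card ≤ K)) ⟨∅, by simp⟩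
    fun s : Finset ι => ∑ i ∈ s, x i
  exact ⟨s, (mem_filter.1 hs).2, hsum.symm⟩

theorem topSum_mono [IsOrderedAddMonoid M] (K : ℕ) : Monotone (topSum (ι := ι) (M := M) K) :=
  fun _ _ hxy => sup_mono_fun fun _ _ => sum_le_sum fun i _ => hxy i

theorem topSum_sup_add_topSum_inf_le [IsOrderedAddMonoid M] (K : ℕ) (a b : ι → M) :
    topSum K (a ⊔ b) + topSum K (a ⊓ b) ≤ topSum K a + topSum K b := by
  classical
  obtain ⟨P, hPK, hP⟩ := exists_card_le_sum_eq_topSum K (a ⊔ b)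
  obtain ⟨Q, hQK, hQ⟩ := exists_card_le_sum_eq_topSum K (a ⊓ b)
  set Pa := P.filter (fun i => i ∈ Q ∨ b i ≤ a i)
  set Pb := P.filter (fun i => i ∈ Q ∨ a i < b i)
  have hunion : Pa ∪ Pb = P := by
    ext i; simp only [Pa, Pb, mem_union, mem_filter]
    have := le_or_gt (b i) (a i); tauto
  have hinter : Pa ∩ Pb = P ∩ Q := by
    ext i; simp only [Pa, Pb, mem_inter, mem_filter]
    have := @not_lt_of_ge _ _ (b i) (a i); tauto
  have hcard : Pa.card + Pb.card + (Q \ P).card = P.card + Q.card := by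
    rw [← card_union_add_card_inter, hunion, hinter, add_assoc, inter_comm,
      card_inter_add_card_sdiff]
  have hPa : Pa.card ≤ K := (card_le_card (filter_subset _ _)).trans hPK
  have hPb : Pb.card ≤ K := (card_le_card (filter_subset _ _)).trans hPK
  obtain ⟨R, hR, hRa, hRb⟩ :=
    (Q \ P).exists_subset_card_le_card_sdiff_le (m := K - Pa.card) (n := K - Pb.card) (by omega)
  calc topSum K (a ⊔ b) + topSum K (a ⊓ b) = ∑ i ∈ P, (a ⊔ b) i + ∑ i ∈ Q, (a ⊓ b) i := by
        rw [hP, hQ]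
    _ ≤ ∑ i ∈ Pa ∪ R, a i + ∑ i ∈ Pb ∪ ((Q \ P) \ R), b i := sum_sup_add_sum_inf_le a b P Q hR
    _ ≤ topSum K a + topSum K b :=
        add_le_add (sum_le_topSum a ((card_union_le _ _).trans (by omega)))
          (sum_le_topSum b ((card_union_le _ _).trans (by omega)))

end TopSum

theorem capacity_constrained_value_monotone_submodular_general
    {S A : Type*} [Fintype A] [DecidableEq S]
    (w : A → S → NNReal) (K : ℕ)
    (vK : Finset S → NNReal)
    (hvK : ∀ T : Finset S, vK T =
      ((Finset.univ : Finset A).powerset.filter (fun A' : Finset A => A'.card ≤ K)).sup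
        (fun A' : Finset A => ∑ i ∈ A', T.sup (w i))) :
    (∀ T U : Finset S, T ⊆ U → vK T ≤ vK U) ∧
      (∀ T U : Finset S, vK (T ∪ U) + vK (T ∩ U) ≤ vK T + vK U) := by
  have hv : ∀ T, vK T = topSum K fun i => T.sup (w i) := hvK
  refine ⟨fun T U hTU => ?_, fun T U => ?_⟩
  · rw [hv, hv]
    exact topSum_mono K fun i => sup_mono hTU
  · set a : A → NNReal := fun i => T.sup (w i)
    set b : A → NNReal := fun i => U.sup (w i)
    have hunion : (fun i => (T ∪ U).sup (w i)) = a ⊔ b := funext fun i => sup_union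
    have hinter : (fun i => (T ∩ U).sup (w i)) ≤ a ⊓ b :=
      fun i => le_inf (sup_mono inter_subset_left) (sup_mono inter_subset_right)
    calc vK (T ∪ U) + vK (T ∩ U) ≤ topSum K (a ⊔ b) + topSum K (a ⊓ b) := by
          rw [hv, hv, hunion]
          exact add_le_add le_rfl (topSum_mono K hinter)
      _ ≤ topSum K a + topSum K b := topSum_sup_add_topSum_inf_le K a b
      _ = vK T + vK U := by rw [hv, hv]

/-- The capacity-constrained block value
`v̄ᴷ(T) = max_{A' ⊆ 𝒜, |A'| ≤ K} ∑_{i ∈ A'} max_{j ∈ T} v i j`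
is monotone and submodular. -/
theorem capacity_constrained_value_monotone_submodular
    {S A : Type*} [Fintype S] [Fintype A] [DecidableEq S] [DecidableEq A]
    (w : A → S → NNReal) (K : ℕ)
    (vK : Finset S → NNReal)
    (hvK : ∀ T : Finset S, vK T =
      ((Finset.univ : Finset A).powerset.filter (fun A' : Finset A => A'.card ≤ K)).sup
        (fun A' : Finset A => ∑ i ∈ A', T.sup (w i))) :
    (∀ T U : Finset S, T ⊆ U → vK T ≤ vK U) ∧
      (∀ T U : Finset S, vK (T ∪ U) + vK (T ∩ U) ≤ vK T + vK U) :=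
  capacity_constrained_value_monotone_submodular_general w K vK hvK
end

section
/- For 0 ≤ p ≤ 1 and n ≥ 1, (1−p)^n + n·p·(1−p)^{n−1} equals P[Bin(n,p) ≤ 1], and if p ≥ 2·log(n)/n with n ≥ 3, then P[Bin(n,p) ≤ 1] ≤ (1 + 2·log n)/n². -/
open MeasureTheory


lemma one_sub_le_exp_aux (x : ℝ) (h0 : 0 ≤ x) (h1 : x ≤ 1) :
    1 - x ≤ Real.exp (-(x + x^2/2)) := by
  have hd : ∀ y : ℝ, HasDerivAt (fun y : ℝ => (1 - y) * Real.exp (y + y^2/2))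
      (-(y^2) * Real.exp (y + y^2/2)) y := by
    intro y
    have h1 : HasDerivAt (fun y : ℝ => 1 - y) (-1) y := by
      simpa using (hasDerivAt_id' y).const_sub (1:ℝ)
    have h2 : HasDerivAt (fun y : ℝ => y + y^2/2) (1 + y) y := by
      have := (hasDerivAt_id' y).fun_add (((hasDerivAt_pow 2 y)).div_const 2)
      exact this.congr_deriv (by ring)
    have := h1.fun_mul h2.exp
    exact this.congr_deriv (by ring)
  have mono : AntitoneOn (fun y : ℝ => (1 - y) * Real.exp (y + y^2/2)) (Set.Icc 0 1) := by
    apply antitoneOn_of_deriv_nonpos (convex_Icc 0 1)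
    · exact (fun y _ => (hd y).continuousAt.continuousWithinAt)
    · exact fun y _ => (hd y).differentiableAt.differentiableWithinAt
    · intro y hy
      rw [(hd y).deriv]
      have := Real.exp_pos (y + y^2/2)
      nlinarith [sq_nonneg y]
  have hg := mono (Set.left_mem_Icc.2 (by norm_num)) (Set.mem_Icc.2 ⟨h0, h1⟩) h0
  simp at hg
  have hE : 0 < Real.exp (x + x^2/2) := Real.exp_pos _
  rw [Real.exp_neg, ← one_div, le_div_iff₀ hE]
  linarith


lemma u_anti (a s : ℝ) (ha : 0 ≤ a) (has : a ≤ s) :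
    (1 + s) * Real.exp (-s) ≤ (1 + a) * Real.exp (-a) := by
  have h1 : (1 : ℝ) + s ≤ (1 + a) * Real.exp (s - a) := by
    have he : s - a + 1 ≤ Real.exp (s - a) := Real.add_one_le_exp (s - a)
    nlinarith [Real.exp_pos (s - a)]
  have hE : 0 < Real.exp (-s) := Real.exp_pos _
  calc (1 + s) * Real.exp (-s) ≤ ((1 + a) * Real.exp (s - a)) * Real.exp (-s) := by
        exact mul_le_mul_of_nonneg_right h1 hE.le
    _ = (1 + a) * Real.exp (-a) := by
        rw [mul_assoc, ← Real.exp_add]; ring_nf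

lemma analytic_bound (n : ℕ) (p : ℝ) (hp0 : 0 ≤ p) (hp1 : p ≤ 1) (hn3 : 3 ≤ n)
    (hp : 2 * Real.log n / n ≤ p) :
    (1 - p) ^ n + n * p * (1 - p) ^ (n - 1) ≤ (1 + 2 * Real.log n) / (n : ℝ) ^ 2 := by
  have hq0 : (0:ℝ) ≤ 1 - p := by linarith
  rcases eq_or_lt_of_le hn3 with h3 | h4
  · -- n = 3
    subst h3
    norm_num
    have hL1 : 1 ≤ Real.log 3 := by
      rw [Real.le_log_iff_exp_le (by norm_num : (0:ℝ) < 3)]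
      have := Real.exp_one_lt_d9
      linarith
    have hL2 : Real.log 3 ≤ 13/6 := by
      rw [Real.log_le_iff_le_exp (by norm_num : (0:ℝ) < 3)]
      have := Real.add_one_le_exp (13/6 : ℝ)
      linarith
    have hp' : 2 * Real.log 3 / 3 ≤ p := by
      convert hp using 3 <;> norm_num
    have hq1 : 1 - p ≤ 1 - 2 * Real.log 3 / 3 := by linarith
    have hstep : (1-p)^3 + 3*p*(1-p)^2 ≤ 3*(1-p)^2 := by nlinarith [sq_nonneg (1-p)]
    have hsq : (1-p)^2 ≤ (1 - 2*Real.log 3/3)^2 := by nlinarith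
    nlinarith [mul_nonneg (sub_nonneg.2 hL1) (by linarith : (0:ℝ) ≤ 13 - 6 * Real.log 3)]
  · -- n ≥ 4
    have hn4 : (4:ℝ) ≤ n := by exact_mod_cast h4
    have hn0 : (0:ℝ) < n := by linarith
    set L := Real.log n with hLdef
    have hL138 : 1.38 ≤ L := by
      have h2 : Real.log 4 ≤ L := Real.log_le_log (by norm_num) hn4
      have h4 : Real.log 4 = 2 * Real.log 2 := by
        rw [show (4:ℝ) = 2^2 by norm_num, Real.log_pow]; push_cast; ring
      have := Real.log_two_gt_d9
      linarith
    have hL0 : (0:ℝ) < L := by linarith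
    have hLn : (n:ℝ) ≤ L * ((n:ℝ) - 1) := by nlinarith
    have hp' : 2 * L ≤ p * n := by
      rw [div_le_iff₀ hn0] at hp; linarith
    -- key: rewrite LHS
    have hn1 : 1 ≤ n := by omega
    have hm : ((n - 1 : ℕ) : ℝ) = (n:ℝ) - 1 := by
      push_cast [Nat.cast_sub hn1]; ring
    have hpow : (1 - p) ^ n = (1 - p) ^ (n-1) * (1 - p) := by
      rw [← pow_succ]; congr 1; omega
    set s : ℝ := ((n:ℝ) - 1) * (p + p^2/2) with hsdef
    have hs2L : 2 * L ≤ s := by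
      nlinarith [mul_nonneg (sub_nonneg.2 hp') (by linarith : (0:ℝ) ≤ (n:ℝ) - 1),
        mul_nonneg (mul_nonneg (sub_nonneg.2 hp') (sub_nonneg.2 hp')) (by linarith : (0:ℝ) ≤ (n:ℝ) - 1),
        mul_nonneg hL0.le (sub_nonneg.2 hLn), sq_nonneg (p*n - 2*L)]
    have hq_le : 1 - p ≤ Real.exp (-(p + p^2/2)) := one_sub_le_exp_aux p hp0 hp1
    have h1 : (1 - p) ^ (n-1) ≤ Real.exp (-s) := by
      calc (1 - p) ^ (n-1) ≤ Real.exp (-(p + p^2/2)) ^ (n-1) :=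
            pow_le_pow_left₀ hq0 hq_le _
        _ = Real.exp (-s) := by
            rw [← Real.exp_nat_mul, hm, hsdef]; ring_nf
    have hx0 : (0:ℝ) ≤ 1 + ((n:ℝ)-1) * p := by nlinarith
    have h2 : 1 + ((n:ℝ)-1) * p ≤ 1 + s := by nlinarith
    have hchain : (1 - p) ^ n + n * p * (1 - p) ^ (n - 1)
        ≤ (1 + s) * Real.exp (-s) := by
      have heq : (1 - p) ^ n + n * p * (1 - p) ^ (n - 1)
          = (1 - p) ^ (n-1) * (1 + ((n:ℝ)-1) * p) := by
        rw [hpow]; ring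
      rw [heq]
      calc (1 - p) ^ (n-1) * (1 + ((n:ℝ)-1) * p)
          ≤ Real.exp (-s) * (1 + s) :=
            mul_le_mul h1 h2 hx0 (Real.exp_pos _).le
        _ = (1 + s) * Real.exp (-s) := by ring
    have hu := u_anti (2*L) s (by linarith) hs2L
    have hfin : (1 + 2*L) * Real.exp (-(2*L)) = (1 + 2*L) / (n:ℝ)^2 := by
      have hx : Real.exp (-(2*L)) = ((n:ℝ)^2)⁻¹ := by
        rw [Real.exp_neg, two_mul, Real.exp_add, Real.exp_log hn0, sq]
      rw [hx, div_eq_mul_inv]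
    linarith [hchain.trans (hu.trans_eq hfin)]



lemma measure_part
    {Ω : Type*} [MeasurableSpace Ω] (μ : Measure Ω) [IsProbabilityMeasure μ]
    (n : ℕ) (p : ℝ) (hp0 : 0 ≤ p) (hp1 : p ≤ 1) (hn : 1 ≤ n)
    (Y : Ω → ℕ)
    (hY : ∀ k : ℕ, μ {ω | Y ω = k} =
      ENNReal.ofReal ((n.choose k : ℝ) * p ^ k * (1 - p) ^ (n - k))) :
    μ {ω | Y ω ≤ 1} = ENNReal.ofReal ((1 - p) ^ n + n * p * (1 - p) ^ (n - 1)) := by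
  have hq0 : (0:ℝ) ≤ 1 - p := by linarith
  set f : ℕ → ENNReal := fun k => ENNReal.ofReal ((n.choose k : ℝ) * p ^ k * (1 - p) ^ (n - k))
    with hfdef
  have hnonneg : ∀ k, 0 ≤ (n.choose k : ℝ) * p ^ k * (1 - p) ^ (n - k) := fun k => by positivity
  -- total sum is 1
  have hT : ∑' k, f k = 1 := by
    rw [tsum_eq_sum (s := Finset.range (n+1)) (fun k hk => by
      simp only [hfdef]
      rw [Nat.choose_eq_zero_of_lt (by simpa using hk)]
      simp)]
    rw [← ENNReal.ofReal_sum_of_nonneg (fun k _ => hnonneg k)]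
    have hbin : ∑ k ∈ Finset.range (n+1), (n.choose k : ℝ) * p ^ k * (1 - p) ^ (n - k) = 1 := by
      have h := add_pow p (1-p) n
      simp only [show p + (1-p) = 1 by ring, one_pow] at h
      calc ∑ k ∈ Finset.range (n+1), (n.choose k : ℝ) * p ^ k * (1 - p) ^ (n - k)
          = ∑ k ∈ Finset.range (n+1), p ^ k * (1 - p) ^ (n - k) * (n.choose k : ℝ) :=
            Finset.sum_congr rfl (fun k _ => by ring)
        _ = 1 := h.symm
    rw [hbin, ENNReal.ofReal_one]
  -- split sum
  have hsplit : f 0 + f 1 + ∑' k, f (k+2) = 1 := by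
    have h1 : ∑' k, f k = f 0 + ∑' k, f (k+1) := tsum_eq_zero_add' ENNReal.summable
    have h2 : ∑' k, f (k+1) = f 1 + ∑' k, f (k+2) := by
      have h := tsum_eq_zero_add' (f := fun k => f (k+1)) ENNReal.summable
      simpa using h
    rw [h1, h2, ← add_assoc] at hT
    exact hT
  have htail_ne : ∑' k, f (k+2) ≠ ⊤ := by
    intro h
    rw [h] at hsplit
    simp at hsplit
  -- upper bound
  have hsets : {ω | Y ω ≤ 1} = {ω | Y ω = 0} ∪ {ω | Y ω = 1} := by
    ext ω; simp [Nat.le_one_iff_eq_zero_or_eq_one]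
  have hub : μ {ω | Y ω ≤ 1} ≤ f 0 + f 1 := by
    rw [hsets]
    refine (measure_union_le _ _).trans ?_
    rw [hY 0, hY 1]
  -- lower bound
  have hcover : {ω | 2 ≤ Y ω} ⊆ ⋃ k, {ω | Y ω = k + 2} := by
    intro ω hω
    have h2 : 2 ≤ Y ω := hω
    exact Set.mem_iUnion.2 ⟨Y ω - 2, by simp only [Set.mem_setOf_eq]; omega⟩
  have hb : μ {ω | 2 ≤ Y ω} ≤ ∑' k, f (k+2) := by
    refine (measure_mono hcover).trans ((measure_iUnion_le _).trans ?_)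
    exact le_of_eq (by simp [hY, hfdef])
  have huniv : (1:ENNReal) ≤ μ {ω | Y ω ≤ 1} + μ {ω | 2 ≤ Y ω} := by
    have hu : (Set.univ : Set Ω) = {ω | Y ω ≤ 1} ∪ {ω | 2 ≤ Y ω} := by
      ext ω; simp; omega
    calc (1:ENNReal) = μ Set.univ := (measure_univ).symm
      _ ≤ μ {ω | Y ω ≤ 1} + μ {ω | 2 ≤ Y ω} := by rw [hu]; exact measure_union_le _ _
  have hlb : f 0 + f 1 ≤ μ {ω | Y ω ≤ 1} := by
    have : f 0 + f 1 + ∑' k, f (k+2) ≤ μ {ω | Y ω ≤ 1} + ∑' k, f (k+2) := by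
      rw [hsplit]
      exact huniv.trans (add_le_add le_rfl hb)
    exact (ENNReal.add_le_add_iff_right htail_ne).1 this
  have heq : μ {ω | Y ω ≤ 1} = f 0 + f 1 := le_antisymm hub hlb
  rw [heq, hfdef]
  simp only [Nat.choose_zero_right, Nat.choose_one_right, pow_zero, pow_one, Nat.sub_zero,
    Nat.cast_one]
  rw [← ENNReal.ofReal_add (by positivity) (by positivity)]
  norm_num

/-- `P[Bin(n,p) ≤ 1] = (1−p)^n + n p (1−p)^{n−1}`, and if `p ≥ 2 log n / n` with `n ≥ 3`,
then `P[Bin(n,p) ≤ 1] ≤ (1 + 2 log n)/n²`. -/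
theorem binomial_le_one_bound
    {Ω : Type*} [MeasurableSpace Ω] (μ : Measure Ω) [IsProbabilityMeasure μ]
    (n : ℕ) (p : ℝ) (hp0 : 0 ≤ p) (hp1 : p ≤ 1) (hn : 1 ≤ n)
    (Y : Ω → ℕ)
    (hY : ∀ k : ℕ, μ {ω | Y ω = k} =
      ENNReal.ofReal ((n.choose k : ℝ) * p ^ k * (1 - p) ^ (n - k))) :
    μ {ω | Y ω ≤ 1} = ENNReal.ofReal ((1 - p) ^ n + n * p * (1 - p) ^ (n - 1)) ∧
      (3 ≤ n → 2 * Real.log n / n ≤ p →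
        (1 - p) ^ n + n * p * (1 - p) ^ (n - 1) ≤ (1 + 2 * Real.log n) / (n : ℝ) ^ 2) := by
  exact ⟨measure_part μ n p hp0 hp1 hn Y hY,
    fun h3 hp' => analytic_bound n p hp0 hp1 h3 hp'⟩
end
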